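/- arXiv:1604.04090 — 6 statements merged into one kernel-verified Lean document; each statement's English description precedes it below -/
import Mathlib

section
/- Let (A,α) and (B,β) be Hom-algebras and R: B⊗A → A⊗B a linear map satisfying R(β(b)⊗α(a)) = (α⊗β)(R(b⊗a)). Then A⊗B with multiplication (a⊗b)(a'⊗b') = a·α⁻¹(a')_R ⊗ β⁻¹(b_R)·b' (writing R(b⊗a)=a_R⊗b_R) and unit 1_A⊗1_B is a Hom-algebra with structure map α⊗β if and only if the following hold: (C1) a_R⊗(1_B)_R = α(a)⊗1_B and (1_A)_R⊗b_R = 1_A⊗β(b); (C2) α(a)_R⊗(bb')_R = a_{Rr}⊗β⁻¹(β(b)_r)b'_R; (C3) α((aa')_R)⊗β(b)_R = α(a_R)α(a')_r⊗b_{Rr}. -/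
open TensorProduct

noncomputable section

namespace HomPaper

variable (K : Type) [Field K]
variable {A B C D H M : Type}
variable [AddCommGroup A] [Module K A] [AddCommGroup B] [Module K B]
variable [AddCommGroup C] [Module K C] [AddCommGroup D] [Module K D]
variable [AddCommGroup H] [Module K H] [AddCommGroup M] [Module K M]

/-- `pairT f g t` pairs a tensor `t = Σ x ⊗ y` against two functionals: `Σ f x * g y`. -/
def pairT (f : A →ₗ[K] K) (g : B →ₗ[K] K) : A ⊗[K] B →ₗ[K] K :=
  (TensorProduct.lid K K).toLinearMap ∘ₗ TensorProduct.map f g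

/-- `contract4 p q` sends `(a ⊗ b, c ⊗ d)` to `p a c * q b d` (with implicit summation). -/
def contract4 (p : A →ₗ[K] C →ₗ[K] K) (q : B →ₗ[K] D →ₗ[K] K) :
    A ⊗[K] B →ₗ[K] C ⊗[K] D →ₗ[K] K :=
  TensorProduct.curry ((TensorProduct.lid K K).toLinearMap ∘ₗ
    TensorProduct.map (TensorProduct.lift p) (TensorProduct.lift q) ∘ₗ
    (TensorProduct.tensorTensorTensorComm K A B C D).toLinearMap)

/-- componentwise multiplication on a tensor product of two algebras:
`(a ⊗ b)(a' ⊗ b') = aa' ⊗ bb'`. -/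
def tmul2 (mA : A →ₗ[K] A →ₗ[K] A) (mB : B →ₗ[K] B →ₗ[K] B) :
    A ⊗[K] B →ₗ[K] A ⊗[K] B →ₗ[K] A ⊗[K] B :=
  TensorProduct.curry ((TensorProduct.map (TensorProduct.lift mA) (TensorProduct.lift mB)) ∘ₗ
    (TensorProduct.tensorTensorTensorComm K A B A B).toLinearMap)

/-- the tensor product comultiplication `Δ(c ⊗ d) = (c₁ ⊗ d₁) ⊗ (c₂ ⊗ d₂)`. -/
def tcomul (dA : A →ₗ[K] A ⊗[K] A) (dB : B →ₗ[K] B ⊗[K] B) :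
    A ⊗[K] B →ₗ[K] (A ⊗[K] B) ⊗[K] (A ⊗[K] B) :=
  (TensorProduct.tensorTensorTensorComm K A A B B).toLinearMap ∘ₗ TensorProduct.map dA dB

/-- the tensor product counit `ε(c ⊗ d) = ε(c)ε(d)`. -/
def tcounit (eA : A →ₗ[K] K) (eB : B →ₗ[K] K) : A ⊗[K] B →ₗ[K] K := pairT K eA eB

/-- The `R`-smash product multiplication
`(a ⊗ b)(a' ⊗ b') = a·α⁻¹(a')_R ⊗ β⁻¹(b_R)·b'`, where `R(b ⊗ a) = a_R ⊗ b_R`. -/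
def smashMul (mA : A →ₗ[K] A →ₗ[K] A) (mB : B →ₗ[K] B →ₗ[K] B)
    (α : A ≃ₗ[K] A) (β : B ≃ₗ[K] B) (R : B ⊗[K] A →ₗ[K] A ⊗[K] B) :
    A ⊗[K] B →ₗ[K] A ⊗[K] B →ₗ[K] A ⊗[K] B :=
  TensorProduct.curry
    ((TensorProduct.map (TensorProduct.lift mA) (TensorProduct.lift mB)) ∘ₗ
     (TensorProduct.assoc K A A (B ⊗[K] B)).symm.toLinearMap ∘ₗ
     (TensorProduct.map LinearMap.id (TensorProduct.assoc K A B B).toLinearMap) ∘ₗ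
     (TensorProduct.map LinearMap.id (TensorProduct.map
        ((TensorProduct.map LinearMap.id β.symm.toLinearMap) ∘ₗ R ∘ₗ
         (TensorProduct.map LinearMap.id α.symm.toLinearMap)) LinearMap.id)) ∘ₗ
     (TensorProduct.map LinearMap.id (TensorProduct.assoc K B A B).symm.toLinearMap) ∘ₗ
     (TensorProduct.assoc K A B (A ⊗[K] B)).toLinearMap)

/-- The antipode of the `R`-smash product:
`S̄(a ⊗ b) = α⁻¹(S_A(a))_R ⊗ β⁻¹(S_B(b)_R)`. -/
def smashS (α : A ≃ₗ[K] A) (β : B ≃ₗ[K] B) (SA : A →ₗ[K] A) (SB : B →ₗ[K] B)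
    (R : B ⊗[K] A →ₗ[K] A ⊗[K] B) : A ⊗[K] B →ₗ[K] A ⊗[K] B :=
  (TensorProduct.map LinearMap.id β.symm.toLinearMap) ∘ₗ R ∘ₗ
  (TensorProduct.map SB (α.symm.toLinearMap ∘ₗ SA)) ∘ₗ (TensorProduct.comm K A B).toLinearMap

/-- the twisting condition (4): `R(β(b) ⊗ α(a)) = (α ⊗ β)(R(b ⊗ a))`. -/
def RTwist (α : A ≃ₗ[K] A) (β : B ≃ₗ[K] B) (R : B ⊗[K] A →ₗ[K] A ⊗[K] B) : Prop :=
  ∀ (a : A) (b : B),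
    R (β b ⊗ₜ[K] α a) = TensorProduct.map α.toLinearMap β.toLinearMap (R (b ⊗ₜ[K] a))

/-- condition (C1): `a_R ⊗ (1_B)_R = α(a) ⊗ 1_B` and `(1_A)_R ⊗ b_R = 1_A ⊗ β(b)`. -/
def RC1 (oneA : A) (oneB : B) (α : A ≃ₗ[K] A) (β : B ≃ₗ[K] B)
    (R : B ⊗[K] A →ₗ[K] A ⊗[K] B) : Prop :=
  (∀ a : A, R (oneB ⊗ₜ[K] a) = α a ⊗ₜ[K] oneB) ∧
  (∀ b : B, R (b ⊗ₜ[K] oneA) = oneA ⊗ₜ[K] β b)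

/-- condition (C2): `α(a)_R ⊗ (bb')_R = a_{Rr} ⊗ β⁻¹(β(b)_r)b'_R`. -/
def RC2 (mB : B →ₗ[K] B →ₗ[K] B) (α : A ≃ₗ[K] A) (β : B ≃ₗ[K] B)
    (R : B ⊗[K] A →ₗ[K] A ⊗[K] B) : Prop :=
  ∀ (a : A) (b b' : B),
    R (mB b b' ⊗ₜ[K] α a) =
      ((TensorProduct.map LinearMap.id (TensorProduct.lift mB)) ∘ₗ
       (TensorProduct.assoc K A B B).toLinearMap ∘ₗ
       (TensorProduct.map (TensorProduct.map LinearMap.id β.symm.toLinearMap) LinearMap.id) ∘ₗ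
       (TensorProduct.map (R ∘ₗ TensorProduct.mk K B A (β b)) LinearMap.id))
        (R (b' ⊗ₜ[K] a))

/-- condition (C3): `α((aa')_R) ⊗ β(b)_R = α(a_R)·α(a')_r ⊗ b_{Rr}`. -/
def RC3 (mA : A →ₗ[K] A →ₗ[K] A) (α : A ≃ₗ[K] A) (β : B ≃ₗ[K] B)
    (R : B ⊗[K] A →ₗ[K] A ⊗[K] B) : Prop :=
  ∀ (a a' : A) (b : B),
    TensorProduct.map α.toLinearMap LinearMap.id (R (β b ⊗ₜ[K] mA a a')) =
      ((TensorProduct.map (TensorProduct.lift mA) LinearMap.id) ∘ₗ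
       (TensorProduct.assoc K A A B).symm.toLinearMap ∘ₗ
       (TensorProduct.map α.toLinearMap (R ∘ₗ (TensorProduct.mk K B A).flip (α a'))))
        (R (b ⊗ₜ[K] a))

/-- A Hom-algebra: `α` multiplicative and unital, Hom-associativity, Hom-unitality. -/
structure IsHomAlgebra (mul : A →ₗ[K] A →ₗ[K] A) (one : A) (α : A ≃ₗ[K] A) : Prop where
  map_mul : ∀ a b : A, α (mul a b) = mul (α a) (α b)
  map_one : α one = one
  hom_assoc : ∀ a b c : A, mul (α a) (mul b c) = mul (mul a b) (α c)
  mul_one : ∀ a : A, mul a one = α a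
  one_mul : ∀ a : A, mul one a = α a

/-- A Hom-coalgebra: `Δ∘α = (α⊗α)∘Δ`, `ε∘α = ε`, Hom-coassociativity
`α(c₁) ⊗ c₂₁ ⊗ c₂₂ = c₁₁ ⊗ c₁₂ ⊗ α(c₂)`, and counit identities `ε(c₁)c₂ = c₁ε(c₂) = α(c)`. -/
structure IsHomCoalgebra (comul : C →ₗ[K] C ⊗[K] C) (counit : C →ₗ[K] K)
    (α : C ≃ₗ[K] C) : Prop where
  comul_map : ∀ c : C,
    comul (α c) = TensorProduct.map α.toLinearMap α.toLinearMap (comul c)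
  counit_map : ∀ c : C, counit (α c) = counit c
  hom_coassoc : ∀ c : C,
    TensorProduct.map α.toLinearMap comul (comul c) =
      (TensorProduct.assoc K C C C) (TensorProduct.map comul α.toLinearMap (comul c))
  counit_left : ∀ c : C,
    TensorProduct.lid K C (TensorProduct.map counit LinearMap.id (comul c)) = α c
  counit_right : ∀ c : C,
    TensorProduct.rid K C (TensorProduct.map LinearMap.id counit (comul c)) = α c

/-- A Hom-bialgebra: simultaneously a Hom-algebra and Hom-coalgebra such that
`Δ` and `ε` are morphisms of Hom-algebras. -/
structure IsHomBialgebra (mul : H →ₗ[K] H →ₗ[K] H) (one : H)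
    (comul : H →ₗ[K] H ⊗[K] H) (counit : H →ₗ[K] K) (β : H ≃ₗ[K] H) : Prop where
  alg : IsHomAlgebra K mul one β
  coalg : IsHomCoalgebra K comul counit β
  comul_mul : ∀ a b : H, comul (mul a b) = tmul2 K mul mul (comul a) (comul b)
  comul_one : comul one = one ⊗ₜ[K] one
  counit_mul : ∀ a b : H, counit (mul a b) = counit a * counit b
  counit_one : counit one = 1

/-- A Hom-Hopf algebra: a Hom-bialgebra with antipode `S`:
`S(h₁)h₂ = h₁S(h₂) = ε(h)1` and `S∘β = β∘S`. -/
structure IsHomHopf (mul : H →ₗ[K] H →ₗ[K] H) (one : H)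
    (comul : H →ₗ[K] H ⊗[K] H) (counit : H →ₗ[K] K) (β : H ≃ₗ[K] H)
    (S : H →ₗ[K] H) : Prop where
  bialg : IsHomBialgebra K mul one comul counit β
  S_left : ∀ h : H,
    TensorProduct.lift mul (TensorProduct.map S LinearMap.id (comul h)) = counit h • one
  S_right : ∀ h : H,
    TensorProduct.lift mul (TensorProduct.map LinearMap.id S (comul h)) = counit h • one
  S_map : ∀ h : H, S (β h) = β (S h)

/-- `(A,▷,α)` is an `(H,β)`-module Hom-algebra. -/
structure IsModuleHomAlgebra
    (Hmul : H →ₗ[K] H →ₗ[K] H) (Hone : H) (Hcomul : H →ₗ[K] H ⊗[K] H)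
    (Hcounit : H →ₗ[K] K) (β : H ≃ₗ[K] H)
    (Amul : A →ₗ[K] A →ₗ[K] A) (Aone : A) (α : A ≃ₗ[K] A)
    (act : H →ₗ[K] A →ₗ[K] A) : Prop where
  act_map : ∀ (h : H) (a : A), α (act h a) = act (β h) (α a)
  act_act : ∀ (h h' : H) (a : A), act (β h) (act h' a) = act (Hmul h h') (α a)
  one_act : ∀ a : A, act Hone a = α a
  act_mul : ∀ (h : H) (a a' : A),
    act (β (β h)) (Amul a a') =
      TensorProduct.lift Amul
        (TensorProduct.map (act.flip a) (act.flip a') (Hcomul h))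
  act_one : ∀ h : H, act h Aone = Hcounit h • Aone

/-- the map `R(h ⊗ a) = (h₁ ▷ a) ⊗ h₂` induced by a module action. -/
def actR (Hcomul : H →ₗ[K] H ⊗[K] H) (act : H →ₗ[K] A →ₗ[K] A) :
    H ⊗[K] A →ₗ[K] A ⊗[K] H :=
  (TensorProduct.map (TensorProduct.lift act) LinearMap.id) ∘ₗ
  (TensorProduct.assoc K H A H).symm.toLinearMap ∘ₗ
  (TensorProduct.map LinearMap.id (TensorProduct.comm K H A).toLinearMap) ∘ₗ
  (TensorProduct.assoc K H H A).toLinearMap ∘ₗ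
  (TensorProduct.map Hcomul LinearMap.id)

/-- `σ` is a Hom-cobraiding form: axioms (CHA1)-(CHA5). -/
structure IsCobraiding (mul : M →ₗ[K] M →ₗ[K] M) (one : M)
    (comul : M →ₗ[K] M ⊗[K] M) (counit : M →ₗ[K] K) (γ : M ≃ₗ[K] M)
    (σ : M →ₗ[K] M →ₗ[K] K) : Prop where
  cha1_left : ∀ x : M, σ x one = counit x
  cha1_right : ∀ x : M, σ one x = counit x
  cha2 : ∀ x y z : M, σ (mul x y) (γ z) = pairT K (σ (γ x)) (σ (γ y)) (comul z)
  cha3 : ∀ x y z : M, σ (γ x) (mul y z) = pairT K (σ.flip (γ z)) (σ.flip (γ y)) (comul x)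
  cha4 : ∀ x y : M,
    ((TensorProduct.lid K M).toLinearMap ∘ₗ
      TensorProduct.map (TensorProduct.lift σ) (TensorProduct.lift mul) ∘ₗ
      (TensorProduct.tensorTensorTensorComm K M M M M).toLinearMap)
        (comul x ⊗ₜ[K] comul y) =
    ((TensorProduct.rid K M).toLinearMap ∘ₗ
      TensorProduct.map (TensorProduct.lift mul.flip) (TensorProduct.lift σ) ∘ₗ
      (TensorProduct.tensorTensorTensorComm K M M M M).toLinearMap)
        (comul x ⊗ₜ[K] comul y)
  cha5 : ∀ x y : M, σ (γ x) (γ y) = σ x y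

/-- `θ` is a Hom-skew pairing: axioms (SP1)-(SP4). -/
structure IsSkewPairing
    (Amul : A →ₗ[K] A →ₗ[K] A) (Aone : A) (Acomul : A →ₗ[K] A ⊗[K] A)
    (Acounit : A →ₗ[K] K) (α : A ≃ₗ[K] A)
    (Bmul : B →ₗ[K] B →ₗ[K] B) (Bone : B) (Bcomul : B →ₗ[K] B ⊗[K] B)
    (Bcounit : B →ₗ[K] K) (β : B ≃ₗ[K] B)
    (θ : A →ₗ[K] B →ₗ[K] K) : Prop where
  sp1_left : ∀ a : A, θ a Bone = Acounit a
  sp1_right : ∀ b : B, θ Aone b = Bcounit b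
  sp2 : ∀ (a a' : A) (b : B),
    θ (Amul a a') (β b) = pairT K (θ (α a)) (θ (α a')) (Bcomul b)
  sp3 : ∀ (a : A) (b b' : B),
    θ (α a) (Bmul b b') = pairT K (θ.flip (β b')) (θ.flip (β b)) (Acomul a)
  sp4 : ∀ (a : A) (b : B), θ (α a) (β b) = θ a b
section Aux
variable (mA : A →ₗ[K] A →ₗ[K] A) (oneA : A) (α : A ≃ₗ[K] A)
variable (mB : B →ₗ[K] B →ₗ[K] B) (oneB : B) (β : B ≃ₗ[K] B)
variable (R : B ⊗[K] A →ₗ[K] A ⊗[K] B)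

/-- `psi a b' t = Σ mA a t₁ ⊗ mB (β⁻¹ t₂) b'`. -/
def psi (a : A) (b' : B) : A ⊗[K] B →ₗ[K] A ⊗[K] B :=
  TensorProduct.map (mA a) ((mB.flip b') ∘ₗ β.symm.toLinearMap)

lemma psi_tmul (a : A) (b' : B) (x : A) (y : B) :
    psi K mA mB β a b' (x ⊗ₜ[K] y) = mA a x ⊗ₜ[K] mB (β.symm y) b' := rfl

lemma smashMul_tmul (a a' : A) (b b' : B) :
    smashMul K mA mB α β R (a ⊗ₜ[K] b) (a' ⊗ₜ[K] b') =
      psi K mA mB β a b' (R (b ⊗ₜ[K] α.symm a')) := by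
  simp only [smashMul, TensorProduct.curry_apply, LinearMap.coe_comp, Function.comp_apply,
    LinearEquiv.coe_coe, TensorProduct.assoc_tmul, TensorProduct.map_tmul, LinearMap.id_coe,
    id_eq, TensorProduct.assoc_symm_tmul]
  generalize R (b ⊗ₜ[K] α.symm a') = t
  induction t using TensorProduct.induction_on with
  | zero => simp [psi]
  | tmul x y => simp [psi]
  | add s t hs ht => simp_all [tmul_add, add_tmul, psi]

/-- the composite appearing on the RHS of (C2). -/
def c2c (b : B) : A ⊗[K] B →ₗ[K] A ⊗[K] B :=
  (TensorProduct.map LinearMap.id (TensorProduct.lift mB)) ∘ₗ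
  (TensorProduct.assoc K A B B).toLinearMap ∘ₗ
  (TensorProduct.map (TensorProduct.map LinearMap.id β.symm.toLinearMap) LinearMap.id) ∘ₗ
  (TensorProduct.map (R ∘ₗ TensorProduct.mk K B A (β b)) LinearMap.id)

lemma c2c_tmul (b : B) (x : A) (y : B) :
    c2c K mB β R b (x ⊗ₜ[K] y) =
      (TensorProduct.map LinearMap.id ((mB.flip y) ∘ₗ β.symm.toLinearMap))
        (R (β b ⊗ₜ[K] x)) := by
  simp only [c2c, LinearMap.coe_comp, Function.comp_apply, TensorProduct.map_tmul,
    LinearMap.id_coe, id_eq, TensorProduct.mk_apply, LinearEquiv.coe_coe]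
  generalize R (β b ⊗ₜ[K] x) = r
  induction r using TensorProduct.induction_on with
  | zero => simp
  | tmul p q => simp
  | add s t hs ht => simp_all [add_tmul]

/-- the composite appearing on the RHS of (C3). -/
def c3c (a' : A) : A ⊗[K] B →ₗ[K] A ⊗[K] B :=
  (TensorProduct.map (TensorProduct.lift mA) LinearMap.id) ∘ₗ
  (TensorProduct.assoc K A A B).symm.toLinearMap ∘ₗ
  (TensorProduct.map α.toLinearMap (R ∘ₗ (TensorProduct.mk K B A).flip (α a')))

lemma c3c_tmul (a' : A) (u : A) (v : B) :
    c3c K mA α R a' (u ⊗ₜ[K] v) =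
      (TensorProduct.map (mA (α u)) LinearMap.id) (R (v ⊗ₜ[K] α a')) := by
  simp only [c3c, LinearMap.coe_comp, Function.comp_apply, TensorProduct.map_tmul,
    LinearMap.id_coe, id_eq, LinearMap.flip_apply, TensorProduct.mk_apply, LinearEquiv.coe_coe]
  generalize R (v ⊗ₜ[K] α a') = r
  induction r using TensorProduct.induction_on with
  | zero => simp
  | tmul p q => simp
  | add s t hs ht => simp_all [tmul_add]

/-- the shared "middle" map for the associativity computation:
`(u⊗v)⊗(x⊗y) ↦ (u ⊗ R(v⊗x)₁) ⊗ (R(v⊗x)₂ ⊗ y)`. -/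
def shuffleR : (A ⊗[K] B) ⊗[K] (A ⊗[K] B) →ₗ[K] (A ⊗[K] A) ⊗[K] (B ⊗[K] B) :=
  (TensorProduct.assoc K A A (B ⊗[K] B)).symm.toLinearMap ∘ₗ
  (TensorProduct.map LinearMap.id (TensorProduct.assoc K A B B).toLinearMap) ∘ₗ
  (TensorProduct.map LinearMap.id (TensorProduct.map R LinearMap.id)) ∘ₗ
  (TensorProduct.map LinearMap.id (TensorProduct.assoc K B A B).symm.toLinearMap) ∘ₗ
  (TensorProduct.assoc K A B (A ⊗[K] B)).toLinearMap

def midMap (a : A) (b'' : B) : (A ⊗[K] B) ⊗[K] (A ⊗[K] B) →ₗ[K] A ⊗[K] B :=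
  (TensorProduct.map (TensorProduct.lift (mA ∘ₗ (mA a)))
    (TensorProduct.lift ((mB ∘ₗ β.symm.toLinearMap).compl₂
      ((mB.flip b'') ∘ₗ β.symm.toLinearMap)))) ∘ₗ shuffleR K R

lemma midMap_tmul (a b'' : _) (u x : A) (v y : B) :
    midMap K mA mB β R a b'' ((u ⊗ₜ[K] v) ⊗ₜ[K] (x ⊗ₜ[K] y)) =
      (TensorProduct.map (mA (mA a u))
        (((mB ∘ₗ β.symm.toLinearMap).compl₂ ((mB.flip b'') ∘ₗ β.symm.toLinearMap)).flip y))
        (R (v ⊗ₜ[K] x)) := by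
  simp only [midMap, shuffleR, LinearMap.coe_comp, Function.comp_apply, LinearEquiv.coe_coe,
    TensorProduct.assoc_tmul, TensorProduct.map_tmul, LinearMap.id_coe, id_eq,
    TensorProduct.assoc_symm_tmul]
  generalize R (v ⊗ₜ[K] x) = r
  induction r using TensorProduct.induction_on with
  | zero => simp
  | tmul p q => simp
  | add s t hs ht => simp_all [tmul_add, add_tmul]


lemma alpha_symm_mul (hA : IsHomAlgebra K mA oneA α) (x y : A) :
    α.symm (mA x y) = mA (α.symm x) (α.symm y) := by
  rw [LinearEquiv.symm_apply_eq, hA.map_mul, α.apply_symm_apply, α.apply_symm_apply]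

lemma alpha_symm_one (hA : IsHomAlgebra K mA oneA α) : α.symm oneA = oneA := by
  rw [LinearEquiv.symm_apply_eq, hA.map_one]

lemma psi_one_one (hA : IsHomAlgebra K mA oneA α) (hB : IsHomAlgebra K mB oneB β) :
    psi K mA mB β oneA oneB =
      TensorProduct.map α.toLinearMap (LinearMap.id : B →ₗ[K] B) := by
  apply TensorProduct.ext'
  intro x y
  simp [psi_tmul, hA.one_mul, hB.mul_one]

lemma psi_alpha (a : A) (c : B) (t : A ⊗[K] B) :
    psi K mA mB β (α a) c t =
      (TensorProduct.map ((mA (α a)) ∘ₗ α.symm.toLinearMap)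
        ((mB.flip c) ∘ₗ β.symm.toLinearMap))
        (TensorProduct.map α.toLinearMap LinearMap.id t) := by
  induction t using TensorProduct.induction_on with
  | zero => simp
  | tmul x y => simp [psi_tmul]
  | add s t hs ht => simp_all

lemma map_alpha_id_inj :
    Function.Injective
      (TensorProduct.map α.toLinearMap (LinearMap.id : B →ₗ[K] B)) := by
  have h : TensorProduct.map α.toLinearMap (LinearMap.id : B →ₗ[K] B) =
      (TensorProduct.congr α (LinearEquiv.refl K B)).toLinearMap := by
    apply TensorProduct.ext'; intro x y; rfl
  rw [h]
  exact (TensorProduct.congr α (LinearEquiv.refl K B)).injective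

lemma stepL (hA : IsHomAlgebra K mA oneA α) (hC3 : RC3 K mA α β R)
    (a a' : A) (b b'' : B) (t : A ⊗[K] B) :
    smashMul K mA mB α β R (α a ⊗ₜ[K] β b) (psi K mA mB β a' b'' t) =
      midMap K mA mB β R a b'' (R (b ⊗ₜ[K] α.symm a') ⊗ₜ[K] t) := by
  induction t using TensorProduct.induction_on with
  | zero => simp
  | add s t hs ht => simp_all [tmul_add]
  | tmul x y =>
    rw [psi_tmul, smashMul_tmul, alpha_symm_mul K mA oneA α hA, psi_alpha,
      hC3 (α.symm a') (α.symm x) b]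
    have hc3 : ((TensorProduct.map (TensorProduct.lift mA) LinearMap.id) ∘ₗ
       (TensorProduct.assoc K A A B).symm.toLinearMap ∘ₗ
       (TensorProduct.map α.toLinearMap
         (R ∘ₗ (TensorProduct.mk K B A).flip (α (α.symm x)))))
        (R (b ⊗ₜ[K] α.symm a')) =
        c3c K mA α R (α.symm x) (R (b ⊗ₜ[K] α.symm a')) := rfl
    rw [hc3]
    generalize R (b ⊗ₜ[K] α.symm a') = s
    induction s using TensorProduct.induction_on with
    | zero => simp
    | add s t hs ht => simp_all [add_tmul]
    | tmul u v =>
      rw [c3c_tmul, midMap_tmul, α.apply_symm_apply]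
      generalize R (v ⊗ₜ[K] x) = r
      induction r using TensorProduct.induction_on with
      | zero => simp
      | add s t hs ht => simp_all
      | tmul p q =>
        simp only [TensorProduct.map_tmul, LinearMap.id_coe, id_eq, LinearMap.coe_comp,
          Function.comp_apply, LinearEquiv.coe_coe, LinearMap.flip_apply,
          LinearMap.compl₂_apply]
        congr 1
        rw [alpha_symm_mul K mA oneA α hA, α.symm_apply_apply, hA.hom_assoc,
          α.apply_symm_apply]

lemma stepR (hB : IsHomAlgebra K mB oneB β) (hC2 : RC2 K mB α β R)
    (a a'' : A) (b' b'' : B) (s : A ⊗[K] B) :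
    smashMul K mA mB α β R (psi K mA mB β a b' s) (α a'' ⊗ₜ[K] β b'') =
      midMap K mA mB β R a b'' (s ⊗ₜ[K] R (b' ⊗ₜ[K] α.symm a'')) := by
  induction s using TensorProduct.induction_on with
  | zero => simp
  | add s t hs ht => simp_all [add_tmul]
  | tmul u v =>
    rw [psi_tmul, smashMul_tmul, α.symm_apply_apply]
    have h2 := hC2 (α.symm a'') (β.symm v) b'
    rw [α.apply_symm_apply, β.apply_symm_apply] at h2
    rw [h2]
    generalize R (b' ⊗ₜ[K] α.symm a'') = t
    induction t using TensorProduct.induction_on with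
    | zero => simp
    | add s t hs ht => simp_all [tmul_add]
    | tmul x y =>
      simp only [LinearMap.coe_comp, Function.comp_apply, TensorProduct.map_tmul,
        LinearMap.id_coe, id_eq, TensorProduct.mk_apply, LinearEquiv.coe_coe]
      rw [midMap_tmul]
      generalize R (v ⊗ₜ[K] x) = r
      induction r using TensorProduct.induction_on with
      | zero => simp
      | add s t hs ht => simp_all [add_tmul]
      | tmul p q =>
        simp only [TensorProduct.map_tmul, LinearMap.id_coe, id_eq, LinearMap.coe_comp,
          Function.comp_apply, LinearEquiv.coe_coe, TensorProduct.assoc_tmul,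
          TensorProduct.lift.tmul, LinearMap.flip_apply, LinearMap.compl₂_apply, psi_tmul]
        congr 1
        rw [alpha_symm_mul K mB oneB β hB, ← hB.hom_assoc, β.apply_symm_apply]

lemma congr_smash (hA : IsHomAlgebra K mA oneA α) (hB : IsHomAlgebra K mB oneB β)
    (hR : RTwist K α β R) (x y : A ⊗[K] B) :
    TensorProduct.congr α β (smashMul K mA mB α β R x y) =
      smashMul K mA mB α β R (TensorProduct.congr α β x) (TensorProduct.congr α β y) := by
  induction x using TensorProduct.induction_on with
  | zero => simp
  | add s t hs ht => simp_all [LinearMap.add_apply]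
  | tmul a b =>
    induction y using TensorProduct.induction_on with
    | zero => simp
    | add s t hs ht => simp_all
    | tmul a' b' =>
      rw [TensorProduct.congr_tmul, TensorProduct.congr_tmul, smashMul_tmul, smashMul_tmul,
        α.symm_apply_apply]
      have h := hR (α.symm a') b
      rw [α.apply_symm_apply] at h
      rw [h]
      generalize R (b ⊗ₜ[K] α.symm a') = t
      induction t using TensorProduct.induction_on with
      | zero => simp
      | add s t hs ht => simp_all
      | tmul x y =>
        simp only [psi_tmul, TensorProduct.map_tmul, TensorProduct.congr_tmul,
          LinearEquiv.coe_coe]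
        rw [hA.map_mul, hB.map_mul, β.apply_symm_apply, β.symm_apply_apply]

lemma back_mul_one (hA : IsHomAlgebra K mA oneA α) (hB : IsHomAlgebra K mB oneB β)
    (hC1 : RC1 K oneA oneB α β R) (x : A ⊗[K] B) :
    smashMul K mA mB α β R x (oneA ⊗ₜ[K] oneB) = TensorProduct.congr α β x := by
  induction x using TensorProduct.induction_on with
  | zero => simp
  | add s t hs ht => simp_all [LinearMap.add_apply]
  | tmul a b =>
    rw [smashMul_tmul, alpha_symm_one K mA oneA α hA, hC1.2 b, psi_tmul,
      β.symm_apply_apply, hA.mul_one, hB.mul_one, TensorProduct.congr_tmul]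

lemma back_one_mul (hA : IsHomAlgebra K mA oneA α) (hB : IsHomAlgebra K mB oneB β)
    (hC1 : RC1 K oneA oneB α β R) (x : A ⊗[K] B) :
    smashMul K mA mB α β R (oneA ⊗ₜ[K] oneB) x = TensorProduct.congr α β x := by
  induction x using TensorProduct.induction_on with
  | zero => simp
  | add s t hs ht => simp_all
  | tmul a b =>
    rw [smashMul_tmul, hC1.1 (α.symm a), α.apply_symm_apply, psi_tmul,
      alpha_symm_one K mB oneB β hB, hA.one_mul, hB.one_mul, TensorProduct.congr_tmul]

lemma back_assoc (hA : IsHomAlgebra K mA oneA α) (hB : IsHomAlgebra K mB oneB β)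
    (hC2 : RC2 K mB α β R) (hC3 : RC3 K mA α β R) (x y z : A ⊗[K] B) :
    smashMul K mA mB α β R (TensorProduct.congr α β x) (smashMul K mA mB α β R y z) =
      smashMul K mA mB α β R (smashMul K mA mB α β R x y) (TensorProduct.congr α β z) := by
  induction x using TensorProduct.induction_on with
  | zero => simp
  | add s t hs ht => simp_all [LinearMap.add_apply]
  | tmul a b =>
    induction y using TensorProduct.induction_on with
    | zero => simp
    | add s t hs ht => simp_all [LinearMap.add_apply]
    | tmul a' b' =>
      induction z using TensorProduct.induction_on with
      | zero => simp
      | add s t hs ht => simp_all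
      | tmul a'' b'' =>
        rw [TensorProduct.congr_tmul, TensorProduct.congr_tmul,
          smashMul_tmul, smashMul_tmul,
          stepL (K := K) (oneA := oneA) (hA := hA) (hC3 := hC3),
          stepR (K := K) (oneB := oneB) (hB := hB) (hC2 := hC2)]

lemma fwd_claim1 (hA : IsHomAlgebra K mA oneA α) (b : B) (t : A ⊗[K] B) :
    smashMul K mA mB α β R (α oneA ⊗ₜ[K] β b)
        (TensorProduct.map α.toLinearMap LinearMap.id t) =
      TensorProduct.map α.toLinearMap LinearMap.id (c2c K mB β R b t) := by
  induction t using TensorProduct.induction_on with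
  | zero => simp
  | add s t hs ht => simp_all
  | tmul x y =>
    simp only [TensorProduct.map_tmul, LinearMap.id_coe, id_eq, LinearEquiv.coe_coe]
    rw [smashMul_tmul, α.symm_apply_apply, c2c_tmul]
    generalize R (β b ⊗ₜ[K] x) = r
    induction r using TensorProduct.induction_on with
    | zero => simp
    | add s t hs ht => simp_all
    | tmul p q =>
      simp only [psi_tmul, TensorProduct.map_tmul, LinearMap.id_coe, id_eq,
        LinearMap.coe_comp, Function.comp_apply, LinearEquiv.coe_coe, LinearMap.flip_apply]
      rw [hA.map_one, hA.one_mul]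

lemma fwd_claim2 (hA : IsHomAlgebra K mA oneA α) (hB : IsHomAlgebra K mB oneB β)
    (a' : A) (t : A ⊗[K] B) :
    smashMul K mA mB α β R (TensorProduct.map α.toLinearMap LinearMap.id t)
        (α (α a') ⊗ₜ[K] oneB) =
      c3c K mA α R a' t := by
  induction t using TensorProduct.induction_on with
  | zero => simp
  | add s t hs ht => simp_all [LinearMap.add_apply]
  | tmul u v =>
    simp only [TensorProduct.map_tmul, LinearMap.id_coe, id_eq, LinearEquiv.coe_coe]
    rw [smashMul_tmul, α.symm_apply_apply, c3c_tmul]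
    generalize R (v ⊗ₜ[K] α a') = r
    induction r using TensorProduct.induction_on with
    | zero => simp
    | add s t hs ht => simp_all
    | tmul p q =>
      simp only [psi_tmul, TensorProduct.map_tmul, LinearMap.id_coe, id_eq,
        LinearEquiv.coe_coe]
      rw [hB.mul_one, β.apply_symm_apply]

end Aux

/-- the R-smash product is a Hom-algebra iff (C1)-(C3) hold. -/
theorem rsmash_homAlgebra_iff
    (mA : A →ₗ[K] A →ₗ[K] A) (oneA : A) (α : A ≃ₗ[K] A)
    (mB : B →ₗ[K] B →ₗ[K] B) (oneB : B) (β : B ≃ₗ[K] B)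
    (hA : IsHomAlgebra K mA oneA α) (hB : IsHomAlgebra K mB oneB β)
    (R : B ⊗[K] A →ₗ[K] A ⊗[K] B) (hR : RTwist K α β R) :
    IsHomAlgebra K (smashMul K mA mB α β R) (oneA ⊗ₜ[K] oneB)
        (TensorProduct.congr α β) ↔
      RC1 K oneA oneB α β R ∧ RC2 K mB α β R ∧ RC3 K mA α β R := by
  constructor
  · intro h
    have hC1 : RC1 K oneA oneB α β R := by
      constructor
      · intro a
        have h1 := h.one_mul (α a ⊗ₜ[K] oneB)
        rw [smashMul_tmul, α.symm_apply_apply,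
          psi_one_one K mA oneA α mB oneB β hA hB,
          TensorProduct.congr_tmul, hB.map_one] at h1
        apply map_alpha_id_inj K α
        rw [h1]
        simp
      · intro b
        have h1 := h.mul_one (oneA ⊗ₜ[K] b)
        rw [smashMul_tmul, alpha_symm_one K mA oneA α hA,
          psi_one_one K mA oneA α mB oneB β hA hB,
          TensorProduct.congr_tmul, hA.map_one] at h1
        apply map_alpha_id_inj K α
        rw [h1]
        simp [hA.map_one]
    refine ⟨hC1, ?_, ?_⟩
    · intro a b b'
      have h1 := h.hom_assoc (oneA ⊗ₜ[K] b) (oneA ⊗ₜ[K] b') (α a ⊗ₜ[K] oneB)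
      rw [TensorProduct.congr_tmul, TensorProduct.congr_tmul,
        smashMul_tmul, smashMul_tmul] at h1
      simp only [LinearEquiv.symm_apply_apply] at h1
      rw [psi_one_one K mA oneA α mB oneB β hA hB,
        fwd_claim1 K mA oneA α mB β R hA b (R (b' ⊗ₜ[K] a)),
        alpha_symm_one K mA oneA α hA, hC1.2 b, psi_tmul, β.symm_apply_apply,
        hA.mul_one, hA.map_one, hB.map_one, smashMul_tmul, α.symm_apply_apply,
        psi_one_one K mA oneA α mB oneB β hA hB] at h1
      exact (map_alpha_id_inj K α h1).symm
    · intro a a' b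
      have h1 := h.hom_assoc (oneA ⊗ₜ[K] b) (α a ⊗ₜ[K] oneB) (α a' ⊗ₜ[K] oneB)
      rw [TensorProduct.congr_tmul, TensorProduct.congr_tmul,
        smashMul_tmul, smashMul_tmul] at h1
      simp only [LinearEquiv.symm_apply_apply] at h1
      rw [hC1.1 a', psi_tmul, alpha_symm_one K mB oneB β hB, hB.mul_one, hB.map_one,
        smashMul_tmul, alpha_symm_mul K mA oneA α hA] at h1
      simp only [LinearEquiv.symm_apply_apply] at h1
      rw [hA.map_one, psi_one_one K mA oneA α mB oneB β hA hB,
        fwd_claim2 K mA oneA α mB oneB β R hA hB a' (R (b ⊗ₜ[K] a))] at h1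
      exact h1
  · rintro ⟨hC1, hC2, hC3⟩
    refine ⟨fun x y => congr_smash K mA oneA α mB oneB β R hA hB hR x y, ?_,
      back_assoc K mA oneA α mB oneB β R hA hB hC2 hC3,
      back_mul_one K mA oneA α mB oneB β R hA hB hC1,
      back_one_mul K mA oneA α mB oneB β R hA hB hC1⟩
    rw [TensorProduct.congr_tmul, hA.map_one, hB.map_one]

end HomPaper
end
end

section
/- Let (H,β) be a Hom-bialgebra and (A,▷,α) an (H,β)-module Hom-algebra. Then A⊗H with multiplication (a⊗h)(a'⊗h') = a(h₁▷α⁻¹(a')) ⊗ β⁻¹(h₂)h' and unit 1_A⊗1_H is a Hom-algebra with structure map α⊗β (the smash product Hom-algebra A♮H). -/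
open TensorProduct

noncomputable section

namespace HomPaper

variable (K : Type) [Field K]
variable {A B C D H M : Type}
variable [AddCommGroup A] [Module K A] [AddCommGroup B] [Module K B]
variable [AddCommGroup C] [Module K C] [AddCommGroup D] [Module K D]
variable [AddCommGroup H] [Module K H] [AddCommGroup M] [Module K M]

section SmashAux

/-- pointwise collapse of composed tensor maps. -/
lemma map_map' {A B C D E F : Type} [AddCommGroup A] [Module K A] [AddCommGroup B] [Module K B]
    [AddCommGroup C] [Module K C] [AddCommGroup D] [Module K D]
    [AddCommGroup E] [Module K E] [AddCommGroup F] [Module K F]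
    (f : C →ₗ[K] E) (g : D →ₗ[K] F) (f' : A →ₗ[K] C) (g' : B →ₗ[K] D) (x : A ⊗[K] B) :
    TensorProduct.map f g (TensorProduct.map f' g' x) =
      TensorProduct.map (f ∘ₗ f') (g ∘ₗ g') x := by
  rw [← LinearMap.comp_apply, ← TensorProduct.map_comp]

lemma map_symm_map' (e : A ≃ₗ[K] A) (f : B ≃ₗ[K] B) (x : A ⊗[K] B) :
    TensorProduct.map e.symm.toLinearMap f.symm.toLinearMap
      (TensorProduct.map e.toLinearMap f.toLinearMap x) = x := by
  induction x using TensorProduct.induction_on with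
  | zero => simp
  | tmul a b => simp
  | add x y hx hy => simp only [map_add, hx, hy]

lemma actR_tmul (Hcomul : H →ₗ[K] H ⊗[K] H) (act : H →ₗ[K] A →ₗ[K] A) (h : H) (x : A) :
    actR K Hcomul act (h ⊗ₜ[K] x) =
      TensorProduct.map (act.flip x) LinearMap.id (Hcomul h) := by
  unfold actR
  simp only [LinearMap.comp_apply, LinearEquiv.coe_coe, TensorProduct.map_tmul,
    LinearMap.id_apply]
  generalize Hcomul h = t
  induction t using TensorProduct.induction_on with
  | zero => simp
  | tmul u v => simp
  | add x y hx hy => simp only [add_tmul, map_add, hx, hy]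

lemma smashMul_tmul_s1 (Hmul : H →ₗ[K] H →ₗ[K] H) (Hcomul : H →ₗ[K] H ⊗[K] H)
    (β : H ≃ₗ[K] H) (Amul : A →ₗ[K] A →ₗ[K] A) (α : A ≃ₗ[K] A)
    (act : H →ₗ[K] A →ₗ[K] A) (a a' : A) (h h' : H) :
    smashMul K Amul Hmul α β (actR K Hcomul act) (a ⊗ₜ[K] h) (a' ⊗ₜ[K] h') =
      TensorProduct.map (Amul a ∘ₗ act.flip (α.symm a'))
        (Hmul.flip h' ∘ₗ β.symm.toLinearMap) (Hcomul h) := by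
  unfold smashMul
  simp only [TensorProduct.curry_apply, LinearMap.comp_apply, LinearEquiv.coe_coe,
    TensorProduct.assoc_tmul, TensorProduct.map_tmul, TensorProduct.assoc_symm_tmul,
    LinearMap.id_apply, actR_tmul]
  generalize Hcomul h = t
  induction t using TensorProduct.induction_on with
  | zero => simp
  | tmul u v => simp
  | add x y hx hy => simp only [map_add, TensorProduct.tmul_add, TensorProduct.add_tmul, hx, hy]

lemma tmul2_tmul (mA : A →ₗ[K] A →ₗ[K] A) (mB : B →ₗ[K] B →ₗ[K] B)
    (x x' : A) (y y' : B) :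
    tmul2 K mA mB (x ⊗ₜ[K] y) (x' ⊗ₜ[K] y') = mA x x' ⊗ₜ[K] mB y y' := by
  simp [tmul2]

/-- the five-fold evaluation map used in the associativity proof:
`Ψ((x ⊗ (y ⊗ z)) ⊗ (p ⊗ q)) = (a·(x ▷ α⁻¹ a'))·((y·p) ▷ a'') ⊗ z·(β⁻¹(q)·h'')`. -/
def smashPsi (Hmul : H →ₗ[K] H →ₗ[K] H) (Amul : A →ₗ[K] A →ₗ[K] A)
    (α : A ≃ₗ[K] A) (β : H ≃ₗ[K] H) (act : H →ₗ[K] A →ₗ[K] A)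
    (a a' a'' : A) (h'' : H) :
    (H ⊗[K] (H ⊗[K] H)) →ₗ[K] (H ⊗[K] H) →ₗ[K] A ⊗[K] H :=
  TensorProduct.curry
    ((TensorProduct.map
        (TensorProduct.lift ((Amul ∘ₗ Amul a).compl₂ (act.flip a'')) ∘ₗ
          TensorProduct.map LinearMap.id (TensorProduct.lift Hmul) ∘ₗ
          (TensorProduct.assoc K A H H).toLinearMap ∘ₗ
          TensorProduct.map (TensorProduct.map (act.flip (α.symm a')) LinearMap.id)
            LinearMap.id)
        (TensorProduct.lift (Hmul.compl₂ (Hmul.flip h'' ∘ₗ β.symm.toLinearMap)))) ∘ₗ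
      (TensorProduct.tensorTensorTensorComm K (H ⊗[K] H) H H H).toLinearMap ∘ₗ
      TensorProduct.map (TensorProduct.assoc K H H H).symm.toLinearMap LinearMap.id)

lemma smashPsi_tmul (Hmul : H →ₗ[K] H →ₗ[K] H) (Amul : A →ₗ[K] A →ₗ[K] A)
    (α : A ≃ₗ[K] A) (β : H ≃ₗ[K] H) (act : H →ₗ[K] A →ₗ[K] A)
    (a a' a'' : A) (h'' : H) (x y z p q : H) :
    smashPsi K Hmul Amul α β act a a' a'' h'' (x ⊗ₜ[K] (y ⊗ₜ[K] z)) (p ⊗ₜ[K] q) =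
      Amul (Amul a (act x (α.symm a'))) (act (Hmul y p) a'') ⊗ₜ[K]
        Hmul z (Hmul (β.symm q) h'') := by
  simp [smashPsi, TensorProduct.curry_apply, TensorProduct.tensorTensorTensorComm_tmul]

end SmashAux

section SmashProofs

variable (Hmul : H →ₗ[K] H →ₗ[K] H) (Hone : H) (Hcomul : H →ₗ[K] H ⊗[K] H)
variable (Hcounit : H →ₗ[K] K) (β : H ≃ₗ[K] H)
variable (Amul : A →ₗ[K] A →ₗ[K] A) (Aone : A) (α : A ≃ₗ[K] A)
variable (act : H →ₗ[K] A →ₗ[K] A)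

lemma Asymm_mul (hA : IsHomAlgebra K Amul Aone α) (x y : A) :
    α.symm (Amul x y) = Amul (α.symm x) (α.symm y) := by
  have h1 := hA.map_mul (α.symm x) (α.symm y)
  rw [α.apply_symm_apply, α.apply_symm_apply] at h1
  rw [← h1, α.symm_apply_apply]

lemma act_symm (hact : IsModuleHomAlgebra K Hmul Hone Hcomul Hcounit β Amul Aone α act)
    (h : H) (x : A) :
    α.symm (act h x) = act (β.symm h) (α.symm x) := by
  have h1 := hact.act_map (β.symm h) (α.symm x)
  rw [β.apply_symm_apply, α.apply_symm_apply] at h1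
  rw [← h1, α.symm_apply_apply]

lemma comul_symm (hH : IsHomBialgebra K Hmul Hone Hcomul Hcounit β) (h : H) :
    Hcomul (β.symm h) =
      TensorProduct.map β.symm.toLinearMap β.symm.toLinearMap (Hcomul h) := by
  have h1 := hH.coalg.comul_map (β.symm h)
  rw [β.apply_symm_apply] at h1
  rw [h1, map_symm_map']

lemma βsymm_one (hH : IsHomBialgebra K Hmul Hone Hcomul Hcounit β) :
    β.symm Hone = Hone :=
  (LinearEquiv.symm_apply_eq β).mpr hH.alg.map_one.symm

lemma lhs_red2 (hH : IsHomBialgebra K Hmul Hone Hcomul Hcounit β)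
    (hA : IsHomAlgebra K Amul Aone α)
    (hact : IsModuleHomAlgebra K Hmul Hone Hcomul Hcounit β Amul Aone α act)
    (a a' a'' : A) (p q h'' : H) (t : H ⊗[K] H) :
    TensorProduct.map
        (Amul (α a) ∘ₗ act.flip (α.symm (Amul a' (act p (α.symm a'')))))
        (Hmul.flip (Hmul (β.symm q) h'') ∘ₗ β.symm.toLinearMap)
        (TensorProduct.map β.toLinearMap β.toLinearMap t) =
      smashPsi K Hmul Amul α β act a a' a'' h''
        (TensorProduct.map β.symm.toLinearMap
          (TensorProduct.map β.symm.toLinearMap LinearMap.id)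
          ((TensorProduct.assoc K H H H)
            (TensorProduct.map Hcomul LinearMap.id t)))
        (p ⊗ₜ[K] q) := by
  induction t using TensorProduct.induction_on with
  | zero => simp
  | add x y hx hy => simp only [map_add, LinearMap.add_apply, hx, hy]
  | tmul u v =>
    simp only [TensorProduct.map_tmul, LinearMap.comp_apply, LinearMap.flip_apply,
      LinearEquiv.coe_coe, LinearMap.id_apply, LinearEquiv.symm_apply_apply]
    rw [Asymm_mul K Amul Aone α hA, act_symm K Hmul Hone Hcomul Hcounit β Amul Aone α act hact]
    rw [show β u = β (β (β.symm u)) by rw [β.apply_symm_apply]]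
    rw [hact.act_mul (β.symm u)]
    rw [comul_symm K Hmul Hone Hcomul Hcounit β hH]
    generalize Hcomul u = w
    induction w using TensorProduct.induction_on with
    | zero => simp
    | add x y hx hy =>
      simp only [map_add, TensorProduct.add_tmul, LinearMap.add_apply,
        TensorProduct.tmul_add, hx, hy]
    | tmul u₁ u₂ =>
      simp only [TensorProduct.map_tmul, TensorProduct.assoc_tmul, TensorProduct.lift.tmul,
        LinearMap.flip_apply, LinearEquiv.coe_coe, LinearMap.id_apply, smashPsi_tmul]
      congr 1
      rw [hA.hom_assoc a]
      congr 1
      rw [hact.act_map, hact.act_map, hact.act_act]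
      simp only [β.apply_symm_apply, α.apply_symm_apply]

lemma rhs_red2 (hH : IsHomBialgebra K Hmul Hone Hcomul Hcounit β)
    (a a' a'' : A) (u h'' : H) (w s : H ⊗[K] H) :
    TensorProduct.map
        (Amul (Amul a (act u (α.symm a'))) ∘ₗ act.flip (α.symm (α a'')))
        (Hmul.flip (β h'') ∘ₗ β.symm.toLinearMap)
        (tmul2 K Hmul Hmul w s) =
      smashPsi K Hmul Amul α β act a a' a'' h'' (u ⊗ₜ[K] w) s := by
  induction w using TensorProduct.induction_on with
  | zero => simp
  | add x y hx hy =>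
    simp only [map_add, LinearMap.add_apply, TensorProduct.tmul_add, hx, hy]
  | tmul v₁ v₂ =>
    induction s using TensorProduct.induction_on with
    | zero => simp
    | add x y hx hy => simp only [map_add, hx, hy]
    | tmul p q =>
      rw [tmul2_tmul]
      simp only [TensorProduct.map_tmul, LinearMap.comp_apply, LinearMap.flip_apply,
        LinearEquiv.coe_coe, α.symm_apply_apply, smashPsi_tmul]
      congr 1
      have h1 : β.symm (Hmul v₂ q) = Hmul (β.symm v₂) (β.symm q) := by
        have h2 := hH.alg.map_mul (β.symm v₂) (β.symm q)
        rw [β.apply_symm_apply, β.apply_symm_apply] at h2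
        rw [← h2, β.symm_apply_apply]
      rw [h1, ← hH.alg.hom_assoc (β.symm v₂) (β.symm q) h'', β.apply_symm_apply]

lemma lhs_red (hH : IsHomBialgebra K Hmul Hone Hcomul Hcounit β)
    (hA : IsHomAlgebra K Amul Aone α)
    (hact : IsModuleHomAlgebra K Hmul Hone Hcomul Hcounit β Amul Aone α act)
    (a a' a'' : A) (h h'' : H) (s : H ⊗[K] H) :
    smashMul K Amul Hmul α β (actR K Hcomul act) (α a ⊗ₜ[K] β h)
      (TensorProduct.map (Amul a' ∘ₗ act.flip (α.symm a''))
        (Hmul.flip h'' ∘ₗ β.symm.toLinearMap) s) =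
      smashPsi K Hmul Amul α β act a a' a'' h''
        (TensorProduct.map β.symm.toLinearMap
          (TensorProduct.map β.symm.toLinearMap LinearMap.id)
          ((TensorProduct.assoc K H H H)
            (TensorProduct.map Hcomul LinearMap.id (Hcomul h)))) s := by
  induction s using TensorProduct.induction_on with
  | zero => simp
  | add x y hx hy => simp only [map_add, hx, hy]
  | tmul p q =>
    simp only [TensorProduct.map_tmul, LinearMap.comp_apply, LinearMap.flip_apply,
      LinearEquiv.coe_coe]
    rw [smashMul_tmul_s1, hH.coalg.comul_map]
    exact lhs_red2 K Hmul Hone Hcomul Hcounit β Amul Aone α act hH hA hact a a' a'' p q h''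
      (Hcomul h)

lemma rhs_red (hH : IsHomBialgebra K Hmul Hone Hcomul Hcounit β)
    (a a' a'' : A) (h' h'' : H) (t : H ⊗[K] H) :
    smashMul K Amul Hmul α β (actR K Hcomul act)
      (TensorProduct.map (Amul a ∘ₗ act.flip (α.symm a'))
        (Hmul.flip h' ∘ₗ β.symm.toLinearMap) t) (α a'' ⊗ₜ[K] β h'') =
      smashPsi K Hmul Amul α β act a a' a'' h''
        (TensorProduct.map LinearMap.id
          (TensorProduct.map β.symm.toLinearMap β.symm.toLinearMap)
          (TensorProduct.map LinearMap.id Hcomul t)) (Hcomul h') := by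
  induction t using TensorProduct.induction_on with
  | zero => simp
  | add x y hx hy => simp only [map_add, LinearMap.add_apply, hx, hy]
  | tmul u v =>
    simp only [TensorProduct.map_tmul, LinearMap.comp_apply, LinearMap.flip_apply,
      LinearEquiv.coe_coe, LinearMap.id_apply]
    rw [smashMul_tmul_s1, hH.comul_mul, comul_symm K Hmul Hone Hcomul Hcounit β hH]
    exact rhs_red2 K Hmul Hone Hcomul Hcounit β Amul α act hH a a' a'' u h''
      (TensorProduct.map β.symm.toLinearMap β.symm.toLinearMap (Hcomul v)) (Hcomul h')

lemma coassocAux (hH : IsHomBialgebra K Hmul Hone Hcomul Hcounit β) (h : H) :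
    TensorProduct.map β.symm.toLinearMap
        (TensorProduct.map β.symm.toLinearMap LinearMap.id)
        ((TensorProduct.assoc K H H H)
          (TensorProduct.map Hcomul LinearMap.id (Hcomul h))) =
      TensorProduct.map LinearMap.id
        (TensorProduct.map β.symm.toLinearMap β.symm.toLinearMap)
        (TensorProduct.map LinearMap.id Hcomul (Hcomul h)) := by
  have hco := hH.coalg.hom_coassoc h
  calc
    TensorProduct.map β.symm.toLinearMap
        (TensorProduct.map β.symm.toLinearMap LinearMap.id)
        ((TensorProduct.assoc K H H H)
          (TensorProduct.map Hcomul LinearMap.id (Hcomul h)))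
      = (TensorProduct.assoc K H H H)
          (TensorProduct.map (TensorProduct.map β.symm.toLinearMap β.symm.toLinearMap)
            LinearMap.id (TensorProduct.map Hcomul LinearMap.id (Hcomul h))) := by
        rw [TensorProduct.map_map_assoc]
    _ = (TensorProduct.assoc K H H H)
          (TensorProduct.map (TensorProduct.map β.symm.toLinearMap β.symm.toLinearMap)
            β.symm.toLinearMap (TensorProduct.map Hcomul β.toLinearMap (Hcomul h))) := by
        rw [map_map', map_map']
        congr 2; ext x; simp
    _ = TensorProduct.map β.symm.toLinearMap
          (TensorProduct.map β.symm.toLinearMap β.symm.toLinearMap)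
          ((TensorProduct.assoc K H H H)
            (TensorProduct.map Hcomul β.toLinearMap (Hcomul h))) := by
        rw [TensorProduct.map_map_assoc]
    _ = TensorProduct.map β.symm.toLinearMap
          (TensorProduct.map β.symm.toLinearMap β.symm.toLinearMap)
          (TensorProduct.map β.toLinearMap Hcomul (Hcomul h)) := by rw [← hco]
    _ = TensorProduct.map LinearMap.id
          (TensorProduct.map β.symm.toLinearMap β.symm.toLinearMap)
          (TensorProduct.map LinearMap.id Hcomul (Hcomul h)) := by
        rw [map_map', map_map']
        congr 2; ext x; simp

lemma muloneAux (hH : IsHomBialgebra K Hmul Hone Hcomul Hcounit β)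
    (hA : IsHomAlgebra K Amul Aone α)
    (hact : IsModuleHomAlgebra K Hmul Hone Hcomul Hcounit β Amul Aone α act)
    (a : A) (t : H ⊗[K] H) :
    TensorProduct.map (Amul a ∘ₗ act.flip (α.symm Aone))
        (Hmul.flip Hone ∘ₗ β.symm.toLinearMap) t =
      α a ⊗ₜ[K]
        (TensorProduct.lid K H (TensorProduct.map Hcounit LinearMap.id t)) := by
  have hone : α.symm Aone = Aone := (LinearEquiv.symm_apply_eq α).mpr hA.map_one.symm
  induction t using TensorProduct.induction_on with
  | zero => simp
  | add x y hx hy => simp only [map_add, TensorProduct.tmul_add, hx, hy]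
  | tmul u v =>
    simp only [TensorProduct.map_tmul, LinearMap.comp_apply, LinearMap.flip_apply,
      LinearEquiv.coe_coe, LinearMap.id_apply, hone, hact.act_one, map_smul,
      LinearMap.smul_apply, hA.mul_one, hH.alg.mul_one, β.apply_symm_apply,
      TensorProduct.lid_tmul, TensorProduct.smul_tmul', TensorProduct.tmul_smul]

end SmashProofs

/-- the smash product A ♮ H is a Hom-algebra. -/
theorem smash_homAlgebra
    (Hmul : H →ₗ[K] H →ₗ[K] H) (Hone : H) (Hcomul : H →ₗ[K] H ⊗[K] H)
    (Hcounit : H →ₗ[K] K) (β : H ≃ₗ[K] H)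
    (Amul : A →ₗ[K] A →ₗ[K] A) (Aone : A) (α : A ≃ₗ[K] A)
    (act : H →ₗ[K] A →ₗ[K] A)
    (hH : IsHomBialgebra K Hmul Hone Hcomul Hcounit β)
    (hA : IsHomAlgebra K Amul Aone α)
    (hact : IsModuleHomAlgebra K Hmul Hone Hcomul Hcounit β Amul Aone α act) :
    IsHomAlgebra K (smashMul K Amul Hmul α β (actR K Hcomul act))
      (Aone ⊗ₜ[K] Hone) (TensorProduct.congr α β) := by
  constructor
  · -- map_mul
    intro x y
    induction x using TensorProduct.induction_on with
    | zero => simp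
    | add u v hu hv => simp only [map_add, LinearMap.add_apply, hu, hv]
    | tmul a h =>
      induction y using TensorProduct.induction_on with
      | zero => simp
      | add u v hu hv => simp only [map_add, LinearMap.add_apply, hu, hv]
      | tmul a' h' =>
        rw [TensorProduct.congr_tmul, TensorProduct.congr_tmul,
          smashMul_tmul_s1, smashMul_tmul_s1, hH.coalg.comul_map]
        generalize Hcomul h = t
        induction t using TensorProduct.induction_on with
        | zero => simp
        | add x y hx hy => simp only [map_add, hx, hy]
        | tmul u v =>
          simp only [TensorProduct.map_tmul, LinearMap.comp_apply, LinearMap.flip_apply,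
            LinearEquiv.coe_coe, TensorProduct.congr_tmul, α.apply_symm_apply,
            hA.map_mul, hact.act_map, hH.alg.map_mul, β.apply_symm_apply,
            α.symm_apply_apply, β.symm_apply_apply]
  · -- map_one
    rw [TensorProduct.congr_tmul, hA.map_one, hH.alg.map_one]
  · -- hom_assoc
    intro x y z
    induction x using TensorProduct.induction_on with
    | zero => simp
    | add u v hu hv => simp only [map_add, LinearMap.add_apply, hu, hv]
    | tmul a h =>
      induction y using TensorProduct.induction_on with
      | zero => simp
      | add u v hu hv => simp only [map_add, LinearMap.add_apply, hu, hv]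
      | tmul a' h' =>
        induction z using TensorProduct.induction_on with
        | zero => simp
        | add u v hu hv => simp only [map_add, LinearMap.add_apply, hu, hv]
        | tmul a'' h'' =>
          rw [TensorProduct.congr_tmul, TensorProduct.congr_tmul,
            smashMul_tmul_s1 K Hmul Hcomul β Amul α act a' a'' h' h'',
            smashMul_tmul_s1 K Hmul Hcomul β Amul α act a a' h h',
            lhs_red K Hmul Hone Hcomul Hcounit β Amul Aone α act hH hA hact a a' a'' h h''
              (Hcomul h'),
            rhs_red K Hmul Hone Hcomul Hcounit β Amul α act hH a a' a'' h' h''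
              (Hcomul h),
            coassocAux K Hmul Hone Hcomul Hcounit β hH h]
  · -- mul_one
    intro x
    induction x using TensorProduct.induction_on with
    | zero => simp
    | add u v hu hv => simp only [map_add, LinearMap.add_apply, hu, hv]
    | tmul a h =>
      rw [smashMul_tmul_s1,
        muloneAux K Hmul Hone Hcomul Hcounit β Amul Aone α act hH hA hact a (Hcomul h),
        hH.coalg.counit_left, TensorProduct.congr_tmul]
  · -- one_mul
    intro x
    induction x using TensorProduct.induction_on with
    | zero => simp
    | add u v hu hv => simp only [map_add, LinearMap.add_apply, hu, hv]
    | tmul a h =>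
      rw [smashMul_tmul_s1, hH.comul_one, TensorProduct.map_tmul, TensorProduct.congr_tmul]
      simp only [LinearMap.comp_apply, LinearMap.flip_apply, LinearEquiv.coe_coe,
        hact.one_act, α.apply_symm_apply, hA.one_mul,
        βsymm_one K Hmul Hone Hcomul Hcounit β hH, hH.alg.one_mul]


end HomPaper
end
end

section
/- Let (H,β) be a Hom-bialgebra and (A,▷,α) an (H,β)-module Hom-algebra. The map R(h⊗a)=h₁▷a⊗h₂ satisfies condition (C3): α((aa')_R)⊗β(h)_R = α(a_R)α(a')_r⊗h_{Rr}; explicitly, α(β(h)₁▷(aa'))⊗β(h)₂ = α(h₁▷a)(h₂₁▷α(a'))⊗h₂₂. -/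
open TensorProduct

noncomputable section

namespace HomPaper

variable (K : Type) [Field K]
variable {A B C D H M : Type}
variable [AddCommGroup A] [Module K A] [AddCommGroup B] [Module K B]
variable [AddCommGroup C] [Module K C] [AddCommGroup D] [Module K D]
variable [AddCommGroup H] [Module K H] [AddCommGroup M] [Module K M]

/-- the induced map `R(h ⊗ a) = h₁ ▷ a ⊗ h₂` satisfies condition (C3). -/
theorem actR_C3
    (Hmul : H →ₗ[K] H →ₗ[K] H) (Hone : H) (Hcomul : H →ₗ[K] H ⊗[K] H)
    (Hcounit : H →ₗ[K] K) (β : H ≃ₗ[K] H)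
    (Amul : A →ₗ[K] A →ₗ[K] A) (Aone : A) (α : A ≃ₗ[K] A)
    (act : H →ₗ[K] A →ₗ[K] A)
    (hH : IsHomBialgebra K Hmul Hone Hcomul Hcounit β)
    (hA : IsHomAlgebra K Amul Aone α)
    (hact : IsModuleHomAlgebra K Hmul Hone Hcomul Hcounit β Amul Aone α act) :
    RC3 K Amul α β (actR K Hcomul act) := by
  intro a a' b
  set x := Amul a a' with hx
  -- the "core" of actR : (H ⊗ H) ⊗ A → A ⊗ H
  set Φ : (H ⊗[K] H) ⊗[K] A →ₗ[K] A ⊗[K] H :=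
    (TensorProduct.map (TensorProduct.lift act) LinearMap.id) ∘ₗ
    (TensorProduct.assoc K H A H).symm.toLinearMap ∘ₗ
    (TensorProduct.map LinearMap.id (TensorProduct.comm K H A).toLinearMap) ∘ₗ
    (TensorProduct.assoc K H H A).toLinearMap with hΦ
  have hΦt : ∀ (h₁ h₂ : H) (y : A),
      Φ ((h₁ ⊗ₜ[K] h₂) ⊗ₜ[K] y) = act h₁ y ⊗ₜ[K] h₂ := by
    intro h₁ h₂ y; simp [hΦ]
  have hR : ∀ (h : H) (y : A),
      actR K Hcomul act (h ⊗ₜ[K] y) = Φ (Hcomul h ⊗ₜ[K] y) := by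
    intro h y; simp [actR, hΦ]
  -- the bilinear map  (u, v) ↦ (u ▷ α a)(v ▷ α a')
  set φ : H →ₗ[K] H →ₗ[K] A :=
    LinearMap.mk₂ K (fun u v => Amul (act u (α a)) (act v (α a')))
      (by intro u u' v; simp)
      (by intro c u v; simp)
      (by intro u v v'; simp)
      (by intro c u v; simp) with hφ
  set F : (H ⊗[K] H) ⊗[K] H →ₗ[K] A ⊗[K] H :=
    TensorProduct.map (TensorProduct.lift φ) LinearMap.id with hF
  have hliftφ : TensorProduct.lift φ =
      (TensorProduct.lift Amul) ∘ₗ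
        TensorProduct.map (act.flip (α a)) (act.flip (α a')) := by
    apply TensorProduct.ext'
    intro u v
    simp [hφ]
  have key1 : ∀ t : H ⊗[K] H,
      TensorProduct.map α.toLinearMap LinearMap.id
        (Φ (TensorProduct.map β.toLinearMap β.toLinearMap t ⊗ₜ[K] x)) =
      F (TensorProduct.map Hcomul β.toLinearMap t) := by
    intro t
    induction t using TensorProduct.induction_on with
    | zero => simp [TensorProduct.zero_tmul]
    | tmul h₁ h₂ =>
        rw [TensorProduct.map_tmul, hΦt, TensorProduct.map_tmul, hF,
          TensorProduct.map_tmul]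
        rw [hliftφ]
        simp only [LinearEquiv.coe_coe, LinearMap.id_coe, id_eq]
        rw [hact.act_map, hx, hA.map_mul, hact.act_mul]
        simp
    | add u v hu hv =>
        simp only [map_add, TensorProduct.add_tmul, hu, hv]
  have key2 : ∀ t : H ⊗[K] H,
      ((TensorProduct.map (TensorProduct.lift Amul) LinearMap.id) ∘ₗ
       (TensorProduct.assoc K A A H).symm.toLinearMap ∘ₗ
       (TensorProduct.map α.toLinearMap
          (actR K Hcomul act ∘ₗ (TensorProduct.mk K H A).flip (α a'))))
        (Φ (t ⊗ₜ[K] a)) =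
      F ((TensorProduct.assoc K H H H).symm
          (TensorProduct.map β.toLinearMap Hcomul t)) := by
    intro t
    induction t using TensorProduct.induction_on with
    | zero => simp [TensorProduct.zero_tmul]
    | tmul h₁ h₂ =>
        rw [hΦt, TensorProduct.map_tmul]
        simp only [LinearMap.comp_apply, TensorProduct.map_tmul,
          TensorProduct.mk_apply, LinearMap.flip_apply]
        rw [hR]
        generalize Hcomul h₂ = s
        induction s using TensorProduct.induction_on with
        | zero => simp [TensorProduct.tmul_zero]
        | tmul u v =>
            rw [hΦt]
            simp only [TensorProduct.assoc_symm_tmul, TensorProduct.map_tmul,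
              LinearMap.id_coe, id_eq, hF]
            rw [hliftφ]
            simp [hact.act_map]
        | add s₁ s₂ hs₁ hs₂ =>
            simp only [TensorProduct.add_tmul, TensorProduct.tmul_add, map_add,
              hs₁, hs₂]
    | add u v hu hv =>
        simp only [map_add, TensorProduct.add_tmul, hu, hv]
  -- assemble
  rw [hR, hH.coalg.comul_map, key1, hR, key2]
  congr 1
  rw [hH.coalg.hom_coassoc]
  exact (LinearEquiv.symm_apply_apply _ _).symm

end HomPaper
end
end

section
/- In a cobraided Hom-Hopf algebra (H,α,σ), the Hom-cobraiding form σ is convolution invertible with inverse σ⁻¹(h,g) = σ(S(h),g). -/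
open TensorProduct

noncomputable section

namespace HomPaper

variable (K : Type) [Field K]
variable {A B C D H M : Type}
variable [AddCommGroup A] [Module K A] [AddCommGroup B] [Module K B]
variable [AddCommGroup C] [Module K C] [AddCommGroup D] [Module K D]
variable [AddCommGroup H] [Module K H] [AddCommGroup M] [Module K M]

lemma pairT_tmul (f : A →ₗ[K] K) (g : B →ₗ[K] K) (a : A) (b : B) :
    pairT K f g (a ⊗ₜ[K] b) = f a * g b := by
  simp [pairT]

lemma contract4_tmul (p : A →ₗ[K] C →ₗ[K] K) (q : B →ₗ[K] D →ₗ[K] K)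
    (a : A) (b : B) (t : C ⊗[K] D) :
    contract4 K p q (a ⊗ₜ[K] b) t = pairT K (p a) (q b) t := by
  induction t using TensorProduct.induction_on with
  | zero => simp
  | tmul c d => simp [contract4, pairT]
  | add x y hx hy => simp only [map_add, hx, hy]

lemma pairT_map (f : A →ₗ[K] K) (g : B →ₗ[K] K) (u : C →ₗ[K] A) (v : D →ₗ[K] B)
    (t : C ⊗[K] D) :
    pairT K f g (TensorProduct.map u v t) = pairT K (f ∘ₗ u) (g ∘ₗ v) t := by
  induction t using TensorProduct.induction_on with
  | zero => simp
  | tmul c d => simp [pairT]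
  | add x y hx hy => simp only [map_add, hx, hy]

/-- in a cobraided Hom-Hopf algebra, the cobraiding form `σ` is
convolution invertible with inverse `σ⁻¹(h,g) = σ(S(h),g)`. -/
theorem cobraiding_convolution_invertible
    (mul : H →ₗ[K] H →ₗ[K] H) (one : H) (comul : H →ₗ[K] H ⊗[K] H)
    (counit : H →ₗ[K] K) (γ : H ≃ₗ[K] H) (S : H →ₗ[K] H)
    (σ : H →ₗ[K] H →ₗ[K] K)
    (hH : IsHomHopf K mul one comul counit γ S)
    (hσ : IsCobraiding K mul one comul counit γ σ) :
    ∀ h g : H,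
      contract4 K σ (σ ∘ₗ S) (comul h) (comul g) = counit h * counit g ∧
      contract4 K (σ ∘ₗ S) σ (comul h) (comul g) = counit h * counit g := by
  intro h g
  -- σ is invariant under γ⁻¹ in both slots
  have cha5' : ∀ x y : H, σ (γ.symm x) (γ.symm y) = σ x y := by
    intro x y
    have := hσ.cha5 (γ.symm x) (γ.symm y)
    simpa using this.symm
  -- Δ commutes with γ⁻¹
  have map_symm : ∀ t : H ⊗[K] H,
      TensorProduct.map γ.symm.toLinearMap γ.symm.toLinearMap
        (TensorProduct.map γ.toLinearMap γ.toLinearMap t) = t := by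
    intro t
    induction t using TensorProduct.induction_on with
    | zero => simp
    | tmul a b => simp
    | add x y hx hy => simp only [map_add, hx, hy]
  have comul_symm : ∀ x : H, comul (γ.symm x) =
      TensorProduct.map γ.symm.toLinearMap γ.symm.toLinearMap (comul x) := by
    intro x
    have hc := hH.bialg.coalg.comul_map (γ.symm x)
    rw [γ.apply_symm_apply] at hc
    rw [hc, map_symm]
  -- multiplication commutes with γ⁻¹
  have mul_symm : ∀ a b : H, γ.symm (mul a b) = mul (γ.symm a) (γ.symm b) := by
    intro a b
    have hm := hH.bialg.alg.map_mul (γ.symm a) (γ.symm b)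
    rw [γ.apply_symm_apply, γ.apply_symm_apply] at hm
    rw [← hm, γ.symm_apply_apply]
  have one_symm : γ.symm one = one := by
    conv_lhs => rw [← hH.bialg.alg.map_one]
    exact γ.symm_apply_apply one
  have e1 : ∀ x : H, (σ (γ.symm x)) ∘ₗ γ.symm.toLinearMap = σ x := by
    intro x; ext c; simpa using cha5' x c
  -- the key computation, from axiom (CHA2)
  have step : ∀ a b : H, pairT K (σ a) (σ b) (comul g) =
      σ (γ.symm (γ.symm (mul a b))) g := by
    intro a b
    have h2 := hσ.cha2 (γ.symm (γ.symm a)) (γ.symm (γ.symm b)) (γ.symm g)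
    rw [γ.apply_symm_apply, γ.apply_symm_apply, γ.apply_symm_apply,
      comul_symm, pairT_map, e1, e1] at h2
    rw [mul_symm, mul_symm]
    exact h2.symm
  -- part 1
  have hA : ∀ t : H ⊗[K] H, contract4 K σ (σ ∘ₗ S) t (comul g) =
      σ (γ.symm (γ.symm (TensorProduct.lift mul
        (TensorProduct.map LinearMap.id S t)))) g := by
    intro t
    induction t using TensorProduct.induction_on with
    | zero => simp
    | tmul a b =>
      rw [contract4_tmul]
      simpa using step a (S b)
    | add x y hx hy =>
      simp only [map_add, LinearMap.add_apply, hx, hy]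
  have hB : ∀ t : H ⊗[K] H, contract4 K (σ ∘ₗ S) σ t (comul g) =
      σ (γ.symm (γ.symm (TensorProduct.lift mul
        (TensorProduct.map S LinearMap.id t)))) g := by
    intro t
    induction t using TensorProduct.induction_on with
    | zero => simp
    | tmul a b =>
      rw [contract4_tmul]
      simpa using step (S a) b
    | add x y hx hy =>
      simp only [map_add, LinearMap.add_apply, hx, hy]
  constructor
  · rw [hA (comul h), hH.S_right h]
    simp only [map_smul, one_symm, LinearMap.smul_apply]
    rw [hσ.cha1_right g]
    simp [smul_eq_mul]
  · rw [hB (comul h), hH.S_left h]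
    simp only [map_smul, one_symm, LinearMap.smul_apply]
    rw [hσ.cha1_right g]
    simp [smul_eq_mul]

end HomPaper
end
end

section
/- A Hom-skew pairing θ between Hom-Hopf algebras (A,α,S_A) and (B,β,S_B) is convolution invertible with inverse θ⁻¹(a,b) = θ(S_A(a),b). -/
open TensorProduct

noncomputable section

namespace HomPaper

variable (K : Type) [Field K]
variable {A B C D H M : Type}
variable [AddCommGroup A] [Module K A] [AddCommGroup B] [Module K B]
variable [AddCommGroup C] [Module K C] [AddCommGroup D] [Module K D]
variable [AddCommGroup H] [Module K H] [AddCommGroup M] [Module K M]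

/-- a Hom-skew pairing `θ` is convolution invertible with inverse
`θ⁻¹(a,b) = θ(S_A(a),b)`. -/
theorem skewPairing_convolution_invertible
    (mA : A →ₗ[K] A →ₗ[K] A) (oneA : A) (dA : A →ₗ[K] A ⊗[K] A) (eA : A →ₗ[K] K)
    (α : A ≃ₗ[K] A) (SA : A →ₗ[K] A)
    (mB : B →ₗ[K] B →ₗ[K] B) (oneB : B) (dB : B →ₗ[K] B ⊗[K] B) (eB : B →ₗ[K] K)
    (β : B ≃ₗ[K] B) (SB : B →ₗ[K] B)
    (hA : IsHomHopf K mA oneA dA eA α SA) (hB : IsHomHopf K mB oneB dB eB β SB)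
    (θ : A →ₗ[K] B →ₗ[K] K)
    (hθ : IsSkewPairing K mA oneA dA eA α mB oneB dB eB β θ) :
    ∀ (a : A) (b : B),
      contract4 K θ (θ ∘ₗ SA) (dA a) (dB b) = eA a * eB b ∧
      contract4 K (θ ∘ₗ SA) θ (dA a) (dB b) = eA a * eB b := by
  -- key lemma 1: for any t : A ⊗ A and b : B,
  -- contract4 θ (θ∘SA) ((α⊗α) t) (dB b) = θ (m (id⊗SA) t) (β b)
  have key1 : ∀ (t : A ⊗[K] A) (b : B),
      contract4 K θ (θ ∘ₗ SA) (TensorProduct.map α.toLinearMap α.toLinearMap t) (dB b)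
        = θ (TensorProduct.lift mA (TensorProduct.map LinearMap.id SA t)) (β b) := by
    intro t b
    induction t using TensorProduct.induction_on with
    | zero => simp
    | tmul x y =>
        simp only [TensorProduct.map_tmul, TensorProduct.lift.tmul, LinearMap.id_coe, id_eq]
        rw [hθ.sp2]
        induction dB b using TensorProduct.induction_on with
        | zero => simp [pairT, contract4]
        | tmul c d =>
            simp [pairT, contract4, smul_eq_mul, hA.S_map]
        | add u v hu hv =>
            simp only [map_add, LinearMap.add_apply] at hu hv ⊢
            rw [hu, hv]
    | add u v hu hv =>
        simp only [map_add, LinearMap.add_apply, LinearMap.map_add]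
        rw [hu, hv]
  have key2 : ∀ (t : A ⊗[K] A) (b : B),
      contract4 K (θ ∘ₗ SA) θ (TensorProduct.map α.toLinearMap α.toLinearMap t) (dB b)
        = θ (TensorProduct.lift mA (TensorProduct.map SA LinearMap.id t)) (β b) := by
    intro t b
    induction t using TensorProduct.induction_on with
    | zero => simp
    | tmul x y =>
        simp only [TensorProduct.map_tmul, TensorProduct.lift.tmul, LinearMap.id_coe, id_eq]
        rw [hθ.sp2]
        induction dB b using TensorProduct.induction_on with
        | zero => simp [pairT, contract4]
        | tmul c d =>
            simp [pairT, contract4, smul_eq_mul, hA.S_map]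
        | add u v hu hv =>
            simp only [map_add, LinearMap.add_apply] at hu hv ⊢
            rw [hu, hv]
    | add u v hu hv =>
        simp only [map_add, LinearMap.add_apply, LinearMap.map_add]
        rw [hu, hv]
  intro a b
  -- write a = α a'
  obtain ⟨a', rfl⟩ : ∃ a', α a' = a := ⟨α.symm a, α.apply_symm_apply a⟩
  have hdA : dA (α a') = TensorProduct.map α.toLinearMap α.toLinearMap (dA a') :=
    hA.bialg.coalg.comul_map a'
  have heA : eA (α a') = eA a' := hA.bialg.coalg.counit_map a'
  have heB : eB (β (β.symm b)) = eB (β.symm b) := hB.bialg.coalg.counit_map (β.symm b)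
  constructor
  · rw [hdA, key1, hA.S_right a']
    simp only [map_smul, LinearMap.smul_apply, hθ.sp1_right, smul_eq_mul, heA]
    -- θ oneA (β b) = eB (β b) = eB b ; need eB (β b) = eB b
    rw [hB.bialg.coalg.counit_map]
  · rw [hdA, key2, hA.S_left a']
    simp only [map_smul, LinearMap.smul_apply, hθ.sp1_right, smul_eq_mul, heA]
    rw [hB.bialg.coalg.counit_map]

end HomPaper
end
end

section
/- Let (A♮_R B, α⊗β) be an R-smash product Hom-Hopf algebra. The maps i:A→A♮_R B, i(a)=a⊗1_B, and j:B→A♮_R B, j(b)=1_A⊗b, are morphisms of Hom-bialgebras. -/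
open TensorProduct

noncomputable section

namespace HomPaper

variable (K : Type) [Field K]
variable {A B C D H M : Type}
variable [AddCommGroup A] [Module K A] [AddCommGroup B] [Module K B]
variable [AddCommGroup C] [Module K C] [AddCommGroup D] [Module K D]
variable [AddCommGroup H] [Module K H] [AddCommGroup M] [Module K M]

/-- the canonical maps `i(a) = a ⊗ 1_B` and `j(b) = 1_A ⊗ b` into the
R-smash product Hom-Hopf algebra are Hom-bialgebra maps. -/
theorem rsmash_inclusions_bialgebraMaps
    (mA : A →ₗ[K] A →ₗ[K] A) (oneA : A) (dA : A →ₗ[K] A ⊗[K] A) (eA : A →ₗ[K] K)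
    (α : A ≃ₗ[K] A) (SA : A →ₗ[K] A)
    (mB : B →ₗ[K] B →ₗ[K] B) (oneB : B) (dB : B →ₗ[K] B ⊗[K] B) (eB : B →ₗ[K] K)
    (β : B ≃ₗ[K] B) (SB : B →ₗ[K] B)
    (hA : IsHomHopf K mA oneA dA eA α SA) (hB : IsHomHopf K mB oneB dB eB β SB)
    (R : B ⊗[K] A →ₗ[K] A ⊗[K] B)
    (hR : RTwist K α β R) (hc1 : RC1 K oneA oneB α β R)
    (hc2 : RC2 K mB α β R) (hc3 : RC3 K mA α β R)
    (hRcomul : ∀ (a : A) (b : B),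
      tcomul K dA dB (R (b ⊗ₜ[K] a)) =
        TensorProduct.map R R (tcomul K dB dA (b ⊗ₜ[K] a)))
    (hRcounit : ∀ (a : A) (b : B),
      tcounit K eA eB (R (b ⊗ₜ[K] a)) = eA a * eB b)
    (hbialg : IsHomBialgebra K (smashMul K mA mB α β R) (oneA ⊗ₜ[K] oneB)
      (tcomul K dA dB) (tcounit K eA eB) (TensorProduct.congr α β)) :
    ((∀ a : A, (TensorProduct.mk K A B).flip oneB (α a) =
        TensorProduct.congr α β ((TensorProduct.mk K A B).flip oneB a)) ∧
     (∀ a a' : A, (TensorProduct.mk K A B).flip oneB (mA a a') =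
        smashMul K mA mB α β R ((TensorProduct.mk K A B).flip oneB a)
          ((TensorProduct.mk K A B).flip oneB a')) ∧
     ((TensorProduct.mk K A B).flip oneB oneA = oneA ⊗ₜ[K] oneB) ∧
     (∀ a : A, tcomul K dA dB ((TensorProduct.mk K A B).flip oneB a) =
        TensorProduct.map ((TensorProduct.mk K A B).flip oneB)
          ((TensorProduct.mk K A B).flip oneB) (dA a)) ∧
     (∀ a : A, tcounit K eA eB ((TensorProduct.mk K A B).flip oneB a) = eA a)) ∧
    ((∀ b : B, TensorProduct.mk K A B oneA (β b) =
        TensorProduct.congr α β (TensorProduct.mk K A B oneA b)) ∧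
     (∀ b b' : B, TensorProduct.mk K A B oneA (mB b b') =
        smashMul K mA mB α β R (TensorProduct.mk K A B oneA b)
          (TensorProduct.mk K A B oneA b')) ∧
     (TensorProduct.mk K A B oneA oneB = oneA ⊗ₜ[K] oneB) ∧
     (∀ b : B, tcomul K dA dB (TensorProduct.mk K A B oneA b) =
        TensorProduct.map (TensorProduct.mk K A B oneA)
          (TensorProduct.mk K A B oneA) (dB b)) ∧
     (∀ b : B, tcounit K eA eB (TensorProduct.mk K A B oneA b) = eB b)) := by

  have hαone : α oneA = oneA := hA.bialg.alg.map_one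
  have hβone : β oneB = oneB := hB.bialg.alg.map_one
  have hαsym : α.symm oneA = oneA := α.injective (by rw [α.apply_symm_apply, hαone])
  have hβsym : β.symm oneB = oneB := β.injective (by rw [β.apply_symm_apply, hβone])
  have hmBone : mB oneB oneB = oneB := by rw [hB.bialg.alg.mul_one, hβone]
  have hmAone : mA oneA oneA = oneA := by rw [hA.bialg.alg.mul_one, hαone]
  refine ⟨⟨?_, ?_, ?_, ?_, ?_⟩, ⟨?_, ?_, ?_, ?_, ?_⟩⟩
  · intro a
    simp only [TensorProduct.mk_apply, LinearMap.flip_apply, TensorProduct.congr_tmul, hβone]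
  · intro a a'
    set_option maxRecDepth 10000 in
    simp only [smashMul, TensorProduct.curry_apply,
      LinearMap.coe_comp, Function.comp_apply, TensorProduct.mk_apply,
      LinearMap.flip_apply, TensorProduct.map_tmul, TensorProduct.assoc_tmul,
      LinearEquiv.coe_coe, TensorProduct.assoc_symm_tmul, LinearMap.id_coe, id_eq]
    rw [hc1.1 (α.symm a')]
    simp [hβsym, hmBone]
  · rfl
  · intro a
    have hdB : dB oneB = oneB ⊗ₜ[K] oneB := hB.bialg.comul_one
    simp only [tcomul, LinearMap.coe_comp, Function.comp_apply, LinearEquiv.coe_coe,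
      TensorProduct.map_tmul, TensorProduct.mk_apply, LinearMap.flip_apply, hdB]
    induction dA a using TensorProduct.induction_on with
    | zero => simp
    | tmul x y => simp [tensorTensorTensorComm_tmul]
    | add x y hx hy =>
        simp only [TensorProduct.add_tmul, map_add, hx, hy]
  · intro a
    simp [tcounit, pairT, hA.bialg, hB.bialg.counit_one]
  · intro b
    simp only [TensorProduct.mk_apply, TensorProduct.congr_tmul, hαone]
  · intro b b'
    set_option maxRecDepth 10000 in
    simp only [smashMul, TensorProduct.curry_apply, LinearMap.coe_comp,
      Function.comp_apply, TensorProduct.mk_apply, TensorProduct.map_tmul,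
      TensorProduct.assoc_tmul, LinearEquiv.coe_coe, TensorProduct.assoc_symm_tmul,
      LinearMap.id_coe, id_eq]
    rw [hαsym, hc1.2 b]
    simp [LinearEquiv.symm_apply_apply, hmAone]
  · rfl
  · intro b
    have hdA : dA oneA = oneA ⊗ₜ[K] oneA := hA.bialg.comul_one
    simp only [tcomul, LinearMap.coe_comp, Function.comp_apply, LinearEquiv.coe_coe,
      TensorProduct.map_tmul, TensorProduct.mk_apply, hdA]
    induction dB b using TensorProduct.induction_on with
    | zero => simp
    | tmul x y => simp [tensorTensorTensorComm_tmul]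
    | add x y hx hy =>
        simp only [TensorProduct.tmul_add, map_add, hx, hy]
  · intro b
    simp [tcounit, pairT, hA.bialg.counit_one]


end HomPaper
end
end
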